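/- Let (R,m,k) be a commutative Noetherian local ring which is not a field. If k is a direct summand of Ω⁴(M) for every non-free finitely generated R-module M, then soc(R) ≠ 0 (equivalently, depth(R) = 0) and k is a direct summand of Ω²(k) (equivalently, R is a Burch ring of depth zero). -/

import Mathlib

open IsLocalRing

universe u

/-- `k = R/m` is a direct summand of the `R`-module `M`, i.e. `M ≅ k ⊕ N` for some `N`. -/
def ResidueFieldIsSummand (R : Type u) [CommRing R] [IsLocalRing R]
    (M : Type u) [AddCommGroup M] [Module R M] : Prop :=
  ∃ p q : Submodule R M, IsCompl p q ∧ Nonempty (p ≃ₗ[R] ResidueField R)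

/-- `π : F → M` is a minimal free cover: `F` is finitely generated free, `π` is
surjective, and `ker π ⊆ m·F`. -/
def IsMinimalFreeCover (R : Type u) [CommRing R] [IsLocalRing R]
    {F M : Type u} [AddCommGroup F] [Module R F] [AddCommGroup M] [Module R M]
    (π : F →ₗ[R] M) : Prop :=
  Module.Free R F ∧ Module.Finite R F ∧ Function.Surjective π ∧
    LinearMap.ker π ≤ (maximalIdeal R) • (⊤ : Submodule R F)

/-- `IsSyzygy R n M N` means that `N` is (isomorphic to) an `n`-th syzygy `Ωⁿ(M)` of `M`,
computed from minimal free covers. -/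
def IsSyzygy (R : Type u) [CommRing R] [IsLocalRing R] :
    ℕ → ModuleCat.{u} R → ModuleCat.{u} R → Prop
  | 0, M, N => Nonempty (N ≃ₗ[R] M)
  | n + 1, M, N => ∃ (F : ModuleCat.{u} R) (π : F →ₗ[R] M),
      IsMinimalFreeCover R π ∧ IsSyzygy R n (ModuleCat.of R (LinearMap.ker π)) N

/-!
Choose generators `t = (t₁, …, t_g)` of `m` and put `M = R^g / R t`, which is not free since
`0 ≠ R t ⊆ m R^g`. Its minimal resolution begins `R → R^g → M` with `1 ↦ t`, so `Ω¹ M = R t` and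
`Ω² M = ann t = soc R`; hence `Ω⁴ M = Ω² (soc R)`. If `soc R = 0` then `Ω⁴ M = 0` cannot contain `k`.
Otherwise `soc R ≅ kᵈ`, so `Ω⁴ M ≅ (Ω² k)ᵈ`, and a splitting `k → (Ω² k)ᵈ → k` has a nonzero
component `k → Ω² k → k`, which is an isomorphism by Schur's lemma.
-/

instance {R : Type*} [CommRing R] [IsLocalRing R] : IsSimpleModule R (ResidueField R) :=
  isSimpleModule_iff_quot_maximal.mpr ⟨maximalIdeal R, inferInstance, ⟨LinearEquiv.refl R _⟩⟩

namespace ResidueFieldIsSummand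

variable {R : Type u} [CommRing R] [IsLocalRing R] {N : Type u} [AddCommGroup N] [Module R N]

theorem of_retraction (A : ResidueField R →ₗ[R] N) (B : N →ₗ[R] ResidueField R)
    (hBA : B ∘ₗ A = LinearMap.id) : ResidueFieldIsSummand R N := by
  have hBA' : ∀ c, B (A c) = c := LinearMap.congr_fun hBA
  let P : N →ₗ[R] LinearMap.range A :=
    LinearMap.codRestrict _ (A ∘ₗ B) fun x => LinearMap.mem_range_self A (B x)
  have hP : ∀ x : LinearMap.range A, P x = x := by
    rintro ⟨_, c, rfl⟩
    exact Subtype.ext (congrArg A (hBA' c))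
  exact ⟨_, _, LinearMap.isCompl_of_proj hP,
    ⟨(LinearEquiv.ofInjective A (Function.LeftInverse.injective hBA')).symm⟩⟩

theorem exists_retraction (h : ResidueFieldIsSummand R N) :
    ∃ (A : ResidueField R →ₗ[R] N) (B : N →ₗ[R] ResidueField R), B ∘ₗ A = LinearMap.id := by
  obtain ⟨p, q, hpq, ⟨e⟩⟩ := h
  refine ⟨p.subtype ∘ₗ e.symm.toLinearMap, e.toLinearMap ∘ₗ p.projectionOnto q hpq, ?_⟩
  ext c
  simp [Submodule.projectionOnto_apply_left]

theorem not_of_subsingleton [Subsingleton N] : ¬ ResidueFieldIsSummand R N := by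
  rintro ⟨p, -, -, ⟨e⟩⟩
  exact not_subsingleton (ResidueField R) e.symm.toEquiv.subsingleton

theorem of_pi {d : ℕ} (h : ResidueFieldIsSummand R (Fin d → N)) : ResidueFieldIsSummand R N := by
  obtain ⟨A, B, hBA⟩ := h.exists_retraction
  let f : Fin d → Module.End R (ResidueField R) := fun i =>
    B ∘ₗ LinearMap.single R (fun _ => N) i ∘ₗ LinearMap.proj i ∘ₗ A
  obtain ⟨i, hi⟩ : ∃ i, f i ≠ 0 := by
    by_contra! hf
    have h1 : ∑ i, f i 1 = 1 := by
      simp only [f, LinearMap.comp_apply, ← map_sum, LinearMap.coe_proj, Function.eval,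
        LinearMap.coe_single, Finset.univ_sum_single]
      exact LinearMap.congr_fun hBA 1
    simp [hf] at h1
  let e := LinearEquiv.ofBijective (f i) (LinearMap.bijective_of_ne_zero hi)
  refine of_retraction (LinearMap.proj i ∘ₗ A)
    (e.symm.toLinearMap ∘ₗ B ∘ₗ LinearMap.single R (fun _ => N) i) ?_
  ext c
  exact e.symm_apply_apply c

end ResidueFieldIsSummand

theorem Submodule.pi_smul_top_le {R F ι : Type*} [CommRing R] [AddCommGroup F] [Module R F]
    [Finite ι] (I : Ideal R) :
    Submodule.pi Set.univ (fun _ : ι => I • (⊤ : Submodule R F)) ≤ I • ⊤ := by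
  classical
  rw [← Submodule.iSup_map_single]
  refine iSup_le fun i => ?_
  rw [Submodule.map_smul'']
  exact Submodule.smul_mono le_rfl le_top

def LinearMap.kerCompLeftEquiv {R M N : Type*} [Semiring R] [AddCommMonoid M] [Module R M]
    [AddCommMonoid N] [Module R N] (f : M →ₗ[R] N) (ι : Type*) :
    LinearMap.ker (f.compLeft ι) ≃ₗ[R] (ι → LinearMap.ker f) where
  toFun v i := ⟨v.1 i, congrFun v.2 i⟩
  invFun w := ⟨fun i => w i, funext fun i => (w i).2⟩
  left_inv _ := rfl
  right_inv _ := rfl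
  map_add' _ _ := rfl
  map_smul' _ _ := rfl

namespace IsSyzygy

variable {R : Type u} [CommRing R] [IsLocalRing R]

theorem congr : ∀ {n : ℕ} {M M' N N' : ModuleCat.{u} R},
    (M ≃ₗ[R] M') → (N ≃ₗ[R] N') → IsSyzygy R n M N → IsSyzygy R n M' N'
  | 0, _, _, _, _, e, f, ⟨g⟩ => ⟨f.symm.trans (g.trans e)⟩
  | n + 1, _, _, _, _, e, f, ⟨F, π, ⟨hfree, hfin, hsurj, hker⟩, hs⟩ => by
    have hker' : LinearMap.ker (e.toLinearMap ∘ₗ π) = LinearMap.ker π := e.ker_comp π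
    refine ⟨F, e.toLinearMap ∘ₗ π, ⟨hfree, hfin, e.surjective.comp hsurj, hker' ▸ hker⟩, ?_⟩
    exact congr (LinearEquiv.ofEq _ _ hker'.symm) f hs

theorem succ {n : ℕ} {F K : Type u} [AddCommGroup F] [Module R F] [AddCommGroup K] [Module R K]
    {M N : ModuleCat.{u} R} {π : F →ₗ[R] M} (hπ : IsMinimalFreeCover R π)
    (e : LinearMap.ker π ≃ₗ[R] K) (h : IsSyzygy R n (ModuleCat.of R K) N) :
    IsSyzygy R (n + 1) M N :=
  ⟨ModuleCat.of R F, π, hπ, h.congr e.symm (LinearEquiv.refl R N)⟩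

theorem of_subsingleton : ∀ (n : ℕ) (M : ModuleCat.{u} R) [Subsingleton M],
    IsSyzygy R n M (ModuleCat.of R PUnit)
  | 0, _, _ => ⟨⟨0, 0, fun _ => Subsingleton.elim _ _, fun _ => Subsingleton.elim _ _⟩⟩
  | n + 1, M, _ => by
    have hπ : IsMinimalFreeCover R (0 : PUnit.{u + 1} →ₗ[R] M) :=
      ⟨Module.Free.of_subsingleton R _, inferInstance, fun _ => ⟨0, Subsingleton.elim _ _⟩,
        fun x _ => Subsingleton.elim x 0 ▸ zero_mem _⟩
    exact succ hπ (LinearEquiv.refl R _) (of_subsingleton n _)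

theorem pi : ∀ {n : ℕ} (d : ℕ) {M N : ModuleCat.{u} R}, IsSyzygy R n M N →
    IsSyzygy R n (ModuleCat.of R (Fin d → M)) (ModuleCat.of R (Fin d → N))
  | 0, _, _, _, ⟨e⟩ => ⟨LinearEquiv.piCongrRight fun _ => e⟩
  | n + 1, d, _, _, ⟨F, π, ⟨_, _, hsurj, hker⟩, hs⟩ => by
    have hπ : IsMinimalFreeCover R (π.compLeft (Fin d)) := by
      refine ⟨inferInstance, inferInstance, fun v => ?_, ?_⟩
      · choose w hw using fun i => hsurj (v i)
        exact ⟨w, funext hw⟩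
      · rw [LinearMap.ker_compLeft]
        exact (Submodule.pi_mono fun _ _ => hker).trans (Submodule.pi_smul_top_le _)
    exact succ hπ (π.kerCompLeftEquiv _) (pi d hs)

end IsSyzygy

section Socle

variable {R : Type u} [CommRing R] [IsLocalRing R]

theorem exists_linearEquiv_torsionBySet_maximalIdeal [IsNoetherianRing R] (M : Type u)
    [AddCommGroup M] [Module R M] [Module.Finite R M] :
    ∃ d : ℕ, Nonempty (Submodule.torsionBySet R M (maximalIdeal R : Set R) ≃ₗ[R]
      (Fin d → ResidueField R)) := by
  let : Module (ResidueField R) (Submodule.torsionBySet R M (maximalIdeal R : Set R)) :=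
    (inferInstance : Module (R ⧸ maximalIdeal R) _)
  have : IsScalarTower R (ResidueField R) (Submodule.torsionBySet R M (maximalIdeal R : Set R)) :=
    (inferInstance : IsScalarTower R (R ⧸ maximalIdeal R) _)
  have : Module.Finite (ResidueField R) (Submodule.torsionBySet R M (maximalIdeal R : Set R)) :=
    .of_restrictScalars_finite R _ _
  exact ⟨_, ⟨(Module.finBasis (ResidueField R) _).equivFun.restrictScalars R⟩⟩

theorem torsionBySet_maximalIdeal_le (hR : ¬ IsField R) :
    Submodule.torsionBySet R R (maximalIdeal R : Set R) ≤ maximalIdeal R := by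
  refine le_maximalIdeal fun htop => hR (isField_iff_maximalIdeal_eq.mpr ?_)
  rw [eq_bot_iff]
  intro a ha
  have h1 : (1 : R) ∈ Submodule.torsionBySet R R (maximalIdeal R : Set R) := htop ▸ trivial
  simpa using (Submodule.mem_torsionBySet_iff _ _).mp h1 ⟨a, ha⟩

end Socle

theorem LinearMap.ker_toSpanSingleton_pi {R ι : Type*} [CommRing R] (t : ι → R) :
    LinearMap.ker (LinearMap.toSpanSingleton R (ι → R) t) =
      Submodule.torsionBySet R R (Set.range t) := by
  ext r
  simp [funext_iff, Submodule.mem_torsionBySet_iff, mul_comm]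

section Presentation

variable {R : Type u} [CommRing R] [IsLocalRing R]

theorem isMinimalFreeCover_mkQ {F : Type u} [AddCommGroup F] [Module R F] [Module.Free R F]
    [Module.Finite R F] {X : Submodule R F} (hX : X ≤ maximalIdeal R • ⊤) :
    IsMinimalFreeCover R X.mkQ :=
  ⟨inferInstance, inferInstance, X.mkQ_surjective, by rwa [X.ker_mkQ]⟩

theorem Submodule.eq_bot_of_projective_quotient {F : Type*} [AddCommGroup F] [Module R F]
    [Module.Finite R F] {X : Submodule R F} (hX : X ≤ maximalIdeal R • ⊤)
    [Module.Projective R (F ⧸ X)] : X = ⊥ := by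
  obtain ⟨σ, hσ⟩ := Module.projective_lifting_property X.mkQ LinearMap.id X.mkQ_surjective
  -- `ρ` is a projection of `F` onto `X`, so `X = ρ F` and `X = ρ X ≤ ρ (m F) = m X`
  let ρ : F →ₗ[R] F := LinearMap.id - σ ∘ₗ X.mkQ
  have hρ_mem : ∀ w, ρ w ∈ X := fun w => by
    have hσw : X.mkQ (σ (X.mkQ w)) = X.mkQ w := LinearMap.congr_fun hσ (X.mkQ w)
    rw [← X.ker_mkQ, LinearMap.mem_ker]
    change X.mkQ (w - σ (X.mkQ w)) = 0
    rw [map_sub, hσw, sub_self]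
  have hρ_fix : ∀ v ∈ X, ρ v = v := fun v hv => by
    simp [ρ, (Submodule.Quotient.mk_eq_zero X).mpr hv]
  have hX_eq : X = Submodule.map ρ ⊤ :=
    le_antisymm (fun v hv => ⟨v, trivial, hρ_fix v hv⟩) (by rintro _ ⟨w, -, rfl⟩; exact hρ_mem w)
  have hX_smul : X ≤ maximalIdeal R • X := fun v hv => by
    rw [← hρ_fix v hv, hX_eq, ← Submodule.map_smul'']
    exact Submodule.mem_map_of_mem (hX hv)
  exact Submodule.eq_bot_of_le_smul_of_le_jacobson_bot _ X
    (hX_eq ▸ (Module.Finite.fg_top).map ρ) hX_smul (maximalIdeal_le_jacobson ⊥)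

omit [IsLocalRing R] in
theorem range_toSpanSingleton_le_smul_top {ι : Type*} [Finite ι] {I : Ideal R} {t : ι → R}
    (ht : ∀ i, t i ∈ I) : LinearMap.range (LinearMap.toSpanSingleton R (ι → R) t) ≤ I • ⊤ := by
  rw [← LinearMap.span_singleton_eq_range, Submodule.span_le, Set.singleton_subset_iff]
  refine Submodule.pi_smul_top_le I fun i _ => ?_
  simpa [Ideal.smul_eq_mul, Ideal.mul_top] using ht i

end Presentation

theorem isSyzygy_four_quotient_of_isSyzygy_two_socle {R : Type u} [CommRing R] [IsLocalRing R]
    (hR : ¬ IsField R) {g : ℕ} {t : Fin g → R} (ht : Ideal.span (Set.range t) = maximalIdeal R)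
    {T : ModuleCat.{u} R}
    (hT : IsSyzygy R 2 (ModuleCat.of R (Submodule.torsionBySet R R (maximalIdeal R : Set R))) T) :
    IsSyzygy R 4
      (ModuleCat.of R ((Fin g → R) ⧸ LinearMap.range (LinearMap.toSpanSingleton R _ t))) T := by
  have htm : ∀ i, t i ∈ maximalIdeal R := fun i => ht ▸ Ideal.subset_span ⟨i, rfl⟩
  let φ := LinearMap.toSpanSingleton R (Fin g → R) t
  have hker :
      LinearMap.ker φ.rangeRestrict = Submodule.torsionBySet R R (maximalIdeal R : Set R) := by
    rw [LinearMap.ker_rangeRestrict, LinearMap.ker_toSpanSingleton_pi,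
      Submodule.torsionBySet_eq_torsionBySet_span, ht]
  have hφ : IsMinimalFreeCover R φ.rangeRestrict := by
    refine ⟨inferInstance, inferInstance, φ.surjective_rangeRestrict, ?_⟩
    rw [hker, Ideal.smul_eq_mul, Ideal.mul_top]
    exact torsionBySet_maximalIdeal_le hR
  exact .succ (isMinimalFreeCover_mkQ (range_toSpanSingleton_le_smul_top htm))
    (.ofEq _ _ (Submodule.ker_mkQ _)) (.succ hφ (.ofEq _ _ hker) hT)

theorem stmt2 (R : Type u) [CommRing R] [IsNoetherianRing R] [IsLocalRing R]
    (hR : ¬ IsField R)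
    (h : ∀ M : ModuleCat.{u} R, Module.Finite R M → ¬ Module.Free R M →
      ∀ N : ModuleCat.{u} R, IsSyzygy R 4 M N → ResidueFieldIsSummand R N) :
    Submodule.torsionBySet R R (maximalIdeal R : Set R) ≠ ⊥ ∧
      ∀ N : ModuleCat.{u} R, IsSyzygy R 2 (ModuleCat.of R (ResidueField R)) N →
        ResidueFieldIsSummand R N := by
  obtain ⟨g, t, ht⟩ := Submodule.fg_iff_exists_fin_generating_family.mp
    (IsNoetherian.noetherian (maximalIdeal R))
  let X := LinearMap.range (LinearMap.toSpanSingleton R (Fin g → R) t)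
  have hX : X ≤ maximalIdeal R • ⊤ :=
    range_toSpanSingleton_le_smul_top fun i => ht ▸ Ideal.subset_span ⟨i, rfl⟩
  have hX0 : X ≠ ⊥ := fun hX0 => hR <| isField_iff_maximalIdeal_eq.mpr <| by
    have ht0 : t = 0 := by simpa using LinearMap.congr_fun (LinearMap.range_eq_bot.mp hX0) 1
    simp [← ht, ht0]
  have hM := h (ModuleCat.of R ((Fin g → R) ⧸ X)) (Module.Finite.quotient R X)
    fun _ => hX0 (Submodule.eq_bot_of_projective_quotient hX)
  refine ⟨fun hsoc => ?_, fun N hN => ?_⟩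
  · have : Subsingleton (Submodule.torsionBySet R R (maximalIdeal R : Set R)) := by
      rw [hsoc]; infer_instance
    exact ResidueFieldIsSummand.not_of_subsingleton
      (hM _ (isSyzygy_four_quotient_of_isSyzygy_two_socle hR ht (.of_subsingleton 2 _)))
  · obtain ⟨d, ⟨e⟩⟩ := exists_linearEquiv_torsionBySet_maximalIdeal (R := R) R
    exact (hM _ (isSyzygy_four_quotient_of_isSyzygy_two_socle hR ht
      ((hN.pi d).congr e.symm (LinearEquiv.refl R _)))).of_pi
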